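/- For every m ∈ ℤ and n ∈ ℕ one has, pointwise on ℂ, the raising identity d*(f_{m,n}) = 2i · sgn(m) · √(n + m₊ + 1) · f_{m+1, n+θ(−m)}, where m₊ = max(m,0), sgn(m) = 1 for m ≥ 0 and −1 for m < 0, and θ(x) = 1 for x > 0 and 0 for x ≤ 0. -/

import Mathlib

open MeasureTheory

/-- Generalized Laguerre polynomial
`L_n^α(x) = Σ_{k=0}^n (-1)^k binom(n+α, n-k) x^k / k!`, where
`binom(n+α, n-k) = Γ(n+α+1)/(Γ(α+k+1)·(n-k)!)`. -/
noncomputable def laguerre (α : ℝ) (n : ℕ) (x : ℝ) : ℝ :=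
  ∑ k ∈ Finset.range (n + 1),
    (-1 : ℝ) ^ k *
      (Real.Gamma ((n : ℝ) + α + 1) /
        (Real.Gamma (α + (k : ℝ) + 1) * (Nat.factorial (n - k) : ℝ))) *
      x ^ k / (Nat.factorial k : ℝ)

/-- The eigenfunctions `f_{m,n}` of the free Weyl operator with homogeneous
magnetic field, identifying `ℝ²` with `ℂ`. -/
noncomputable def fmn (m : ℤ) (n : ℕ) (z : ℂ) : ℂ :=
  (Real.sqrt ((Nat.factorial n : ℝ) / (Real.pi * (Nat.factorial (n + m.natAbs) : ℝ))) : ℂ) *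
    (Real.exp (-(‖z‖) ^ 2 / 2) : ℂ) *
    (if 0 ≤ m then z ^ m.natAbs else (starRingEnd ℂ z) ^ m.natAbs) *
    ((laguerre (m.natAbs : ℝ) n ((‖z‖) ^ 2) : ℝ) : ℂ)

/-- Wirtinger derivative `∂u = (1/2)(∂u/∂x₁ - i ∂u/∂x₂)`. -/
noncomputable def wirtDeriv (u : ℂ → ℂ) (z : ℂ) : ℂ :=
  (1/2) * (fderiv ℝ u z 1 - Complex.I * fderiv ℝ u z Complex.I)

/-- Conjugate Wirtinger derivative `∂̄u = (1/2)(∂u/∂x₁ + i ∂u/∂x₂)`. -/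
noncomputable def wirtDerivBar (u : ℂ → ℂ) (z : ℂ) : ℂ :=
  (1/2) * (fderiv ℝ u z 1 + Complex.I * fderiv ℝ u z Complex.I)

/-- The annihilation-type operator `(d u)(z) = -2i(∂u(z) + (conj z / 2) u(z))`. -/
noncomputable def opD (u : ℂ → ℂ) (z : ℂ) : ℂ :=
  -2 * Complex.I * (wirtDeriv u z + (starRingEnd ℂ z) / 2 * u z)

/-- The creation-type operator `(d* u)(z) = 2i(-∂̄u(z) + (z/2) u(z))`. -/
noncomputable def opDstar (u : ℂ → ℂ) (z : ℂ) : ℂ :=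
  2 * Complex.I * (-(wirtDerivBar u z) + z / 2 * u z)

/-! Write `s = z z̄`. Then `f_{m,n} = c · h(z) · e^{-s/2} L_n^{|m|}(s)` with `h = z^{|m|}` or
`z̄^{|m|}`, where `e^{-s/2} L(s)` is holomorphic in `s`; since `∂̄ s = z`, the chain rule gives
`d* f_{m,n}` explicitly. For `m ≥ 0` it is `2i c z^{m+1} e^{-s/2} (L - L')`, and
`L_n^a - (L_n^a)' = L_n^{a+1}` is Pascal's rule on the coefficients. For `m = -(b+1)` it is
`2i c z̄^b e^{-s/2} (sL - sL' - (b+1)L)`, which equals `-(n+1)` times `L_{n+1}^b` by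
`(j+1) C(N,j+1) = (N-j) C(N,j)`. The normalising constants absorb `√(n+m+1)`, resp. `√(n+1)`. -/

open Polynomial Complex ComplexConjugate

theorem Nat.choose_add_one_mul_add_mul_choose (n b i : ℕ) :
    (n + b + 1).choose (b + i + 1) * (b + i + 1) + i * (n + b + 1).choose (b + i)
      = (n + 1) * (n + b + 1).choose (b + i) := by
  rcases le_or_gt (b + i) (n + b + 1) with h | h
  · rw [Nat.choose_succ_right_eq, mul_comm i, ← mul_add, mul_comm]
    congr 1
    omega
  · rw [Nat.choose_eq_zero_of_lt h, Nat.choose_eq_zero_of_lt (by omega)]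
    simp

/-- `binom(n+a, n-k)` is written as `(n+a).choose (a+k)`, which vanishes for `k > n`, so that
`coeff_laguerrePoly` holds for every `k`. -/
noncomputable def laguerrePoly (R : Type*) [Field R] (a n : ℕ) : R[X] :=
  ∑ k ∈ Finset.range (n + 1), C ((-1) ^ k * ((n + a).choose (a + k) : R) / k.factorial) * X ^ k

section LaguerrePoly

variable {R : Type*} [Field R]

theorem coeff_laguerrePoly (a n k : ℕ) :
    (laguerrePoly R a n).coeff k = (-1) ^ k * ((n + a).choose (a + k) : R) / k.factorial := by
  simp only [laguerrePoly, finsetSum_coeff, coeff_C_mul_X_pow, Finset.sum_ite_eq,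
    Finset.mem_range]
  split_ifs with hk
  · rfl
  · rw [Nat.choose_eq_zero_of_lt (by omega)]
    simp

variable [CharZero R]

theorem laguerrePoly_succ_left (a n : ℕ) :
    laguerrePoly R (a + 1) n = laguerrePoly R a n - derivative (laguerrePoly R a n) := by
  ext k
  simp only [coeff_sub, coeff_derivative, coeff_laguerrePoly, Nat.factorial_succ]
  rw [show n + (a + 1) = n + a + 1 by ring, show a + 1 + k = a + k + 1 by ring,
    show a + (k + 1) = a + k + 1 by ring, Nat.choose_succ_succ']
  push_cast
  field_simp
  ring

theorem X_mul_derivative_laguerrePoly (b n : ℕ) :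
    X * derivative (laguerrePoly R (b + 1) n) = X * laguerrePoly R (b + 1) n
      - C ((b : R) + 1) * laguerrePoly R (b + 1) n + C ((n : R) + 1) * laguerrePoly R b (n + 1) := by
  have key (i : ℕ) : ((n + b + 1).choose (b + i + 1) : R) * (b + i + 1)
      + i * (n + b + 1).choose (b + i) = (n + 1) * (n + b + 1).choose (b + i) := by
    exact_mod_cast Nat.choose_add_one_mul_add_mul_choose n b i
  ext k
  simp only [coeff_sub, coeff_add, coeff_C_mul, coeff_laguerrePoly]
  rw [show n + (b + 1) = n + b + 1 by ring, show n + 1 + b = n + b + 1 by ring]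
  rcases k with _ | k
  · simp only [mul_coeff_zero, coeff_X_zero, zero_mul, pow_zero, add_zero, one_mul,
      Nat.factorial_zero, Nat.cast_one, div_one, zero_sub] at key ⊢
    linear_combination key 0
  · have := key (k + 1)
    simp only [coeff_X_mul, coeff_derivative, coeff_laguerrePoly, Nat.factorial_succ]
    rw [show b + 1 + (k + 1) = b + (k + 1) + 1 by ring, show b + 1 + k = b + (k + 1) by ring]
    push_cast at this ⊢
    field_simp
    linear_combination (-1) ^ (k + 1) / (k.factorial : R) * this

end LaguerrePoly

open Nat Real in
theorem laguerre_natCast_eq_eval (a n : ℕ) (x : ℝ) :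
    (laguerre a n x : ℂ) = (laguerrePoly ℂ a n).eval (x : ℂ) := by
  simp only [laguerre, laguerrePoly, eval_finsetSum, eval_mul, eval_C, eval_pow, eval_X]
  push_cast
  refine Finset.sum_congr rfl fun k hk => ?_
  have hk : k ≤ n := Nat.lt_succ_iff.mp (Finset.mem_range.mp hk)
  rw [show (n : ℝ) + a + 1 = (n + a : ℕ) + 1 by push_cast; ring,
    show (a : ℝ) + k + 1 = (a + k : ℕ) + 1 by push_cast; ring,
    Real.Gamma_nat_eq_factorial, Real.Gamma_nat_eq_factorial, Nat.cast_choose ℂ (by omega),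
    show n + a - (a + k) = n - k by omega]
  push_cast
  ring

section WirtingerCalculus

variable {u v : ℂ → ℂ} {z : ℂ}

theorem wirtDerivBar_mul (hu : DifferentiableAt ℝ u z) (hv : DifferentiableAt ℝ v z) :
    wirtDerivBar (fun w => u w * v w) z = u z * wirtDerivBar v z + v z * wirtDerivBar u z := by
  simp only [wirtDerivBar, fderiv_fun_mul hu hv, one_div, add_apply, smul_apply, smul_eq_mul]
  ring

theorem HasDerivAt.wirtDerivBar_comp {g : ℂ → ℂ} {g' : ℂ} (hg : HasDerivAt g g' (u z))
    (hu : DifferentiableAt ℝ u z) :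
    wirtDerivBar (fun w => g (u w)) z = g' * wirtDerivBar u z := by
  have := (hg.hasFDerivAt.restrictScalars ℝ).comp z hu.hasFDerivAt
  simp only [wirtDerivBar, Function.comp_def] at this ⊢
  rw [this.fderiv]
  simp only [ContinuousLinearMap.comp_apply, ContinuousLinearMap.coe_restrictScalars',
    ContinuousLinearMap.toSpanSingleton_apply, smul_eq_mul]
  ring

theorem wirtDerivBar_id : wirtDerivBar id z = 0 := by
  simp [wirtDerivBar]

theorem wirtDerivBar_eq_zero_of_differentiableAt (hu : DifferentiableAt ℂ u z) :
    wirtDerivBar u z = 0 := by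
  simpa [wirtDerivBar_id] using hu.hasDerivAt.wirtDerivBar_comp (u := id) differentiableAt_id

theorem wirtDerivBar_conj : wirtDerivBar conj z = 1 := by
  have : fderiv ℝ conj z = _ := conjCLE.fderiv
  norm_num [wirtDerivBar, this]

theorem wirtDerivBar_conj_pow (a : ℕ) :
    wirtDerivBar (fun w => conj w ^ a) z = a * conj z ^ (a - 1) := by
  rw [(hasDerivAt_pow a (conj z)).wirtDerivBar_comp differentiable_conj.differentiableAt,
    wirtDerivBar_conj, mul_one]

theorem wirtDerivBar_mul_conj : wirtDerivBar (fun w => w * conj w) z = z := by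
  rw [wirtDerivBar_mul differentiableAt_fun_id differentiable_conj.differentiableAt,
    wirtDerivBar_conj, wirtDerivBar_eq_zero_of_differentiableAt differentiableAt_fun_id]
  ring

theorem opDstar_const_mul (c : ℂ) (hu : DifferentiableAt ℝ u z) :
    opDstar (fun w => c * u w) z = c * opDstar u z := by
  rw [opDstar, opDstar, wirtDerivBar_mul (differentiableAt_const c) hu,
    wirtDerivBar_eq_zero_of_differentiableAt (differentiableAt_const c)]
  ring

end WirtingerCalculus

noncomputable def laguerreFun (a n : ℕ) (s : ℂ) : ℂ :=
  cexp (-s / 2) * (laguerrePoly ℂ a n).eval s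

section LaguerreFun

variable {z : ℂ}

theorem hasDerivAt_laguerreFun (a n : ℕ) (s : ℂ) :
    HasDerivAt (laguerreFun a n) (cexp (-s / 2) *
      ((derivative (laguerrePoly ℂ a n)).eval s - (laguerrePoly ℂ a n).eval s / 2)) s := by
  have hexp : HasDerivAt (fun s => cexp (-s / 2)) (cexp (-s / 2) * (-1 / 2)) s :=
    ((hasDerivAt_neg s).div_const 2).cexp
  refine (hexp.mul ((laguerrePoly ℂ a n).hasDerivAt s)).congr_deriv ?_
  ring

theorem differentiableAt_laguerreFun_mul_conj (a n : ℕ) :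
    DifferentiableAt ℝ (fun w => laguerreFun a n (w * conj w)) z :=
  (hasDerivAt_laguerreFun a n _).differentiableAt.restrictScalars ℝ |>.comp z
    (differentiableAt_fun_id.fun_mul differentiable_conj.differentiableAt)

theorem wirtDerivBar_laguerreFun_mul_conj (a n : ℕ) :
    wirtDerivBar (fun w => laguerreFun a n (w * conj w)) z = z * cexp (-(z * conj z) / 2) *
      ((derivative (laguerrePoly ℂ a n)).eval (z * conj z)
        - (laguerrePoly ℂ a n).eval (z * conj z) / 2) := by
  rw [(hasDerivAt_laguerreFun a n _).wirtDerivBar_comp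
    (differentiableAt_fun_id.fun_mul differentiable_conj.differentiableAt), wirtDerivBar_mul_conj]
  ring

theorem opDstar_pow_mul_laguerreFun (a n : ℕ) :
    opDstar (fun w => w ^ a * laguerreFun a n (w * conj w)) z
      = 2 * I * (z ^ (a + 1) * laguerreFun (a + 1) n (z * conj z)) := by
  rw [opDstar, wirtDerivBar_mul (differentiableAt_pow a)
    (differentiableAt_laguerreFun_mul_conj a n), wirtDerivBar_laguerreFun_mul_conj,
    wirtDerivBar_eq_zero_of_differentiableAt (differentiableAt_pow a),
    laguerreFun, laguerreFun, laguerrePoly_succ_left, eval_sub]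
  ring

theorem opDstar_conj_pow_mul_laguerreFun (b n : ℕ) :
    opDstar (fun w => conj w ^ (b + 1) * laguerreFun (b + 1) n (w * conj w)) z
      = -2 * I * (n + 1) * (conj z ^ b * laguerreFun b (n + 1) (z * conj z)) := by
  have key := congrArg (eval (z * conj z)) (X_mul_derivative_laguerrePoly (R := ℂ) b n)
  simp only [eval_mul, eval_X, eval_sub, eval_add, eval_C] at key
  rw [opDstar, wirtDerivBar_mul (differentiable_conj.differentiableAt.fun_pow _)
    (differentiableAt_laguerreFun_mul_conj _ n), wirtDerivBar_laguerreFun_mul_conj,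
    wirtDerivBar_conj_pow, laguerreFun, laguerreFun]
  push_cast
  linear_combination (-2 * I * cexp (-(z * conj z) / 2) * conj z ^ b) * key

end LaguerreFun

open Nat Real in
noncomputable def fmnNormConst (a n : ℕ) : ℝ := √(n ! / (π * (n + a)!))

open Nat Real in
theorem fmnNormConst_eq_sqrt_mul (a n : ℕ) :
    fmnNormConst a n = √(n + a + 1) * fmnNormConst (a + 1) n := by
  rw [fmnNormConst, fmnNormConst, ← sqrt_mul (by positivity),
    show n + (a + 1) = n + a + 1 by ring, factorial_succ]
  congr 1
  push_cast
  field_simp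

open Nat Real in
theorem sqrt_mul_fmnNormConst_succ_right (b n : ℕ) :
    √(n + 1) * fmnNormConst b (n + 1) = (n + 1) * fmnNormConst (b + 1) n := by
  rw [fmnNormConst, fmnNormConst, ← sq_eq_sq₀ (by positivity) (by positivity), mul_pow, mul_pow,
    sq_sqrt (by positivity), sq_sqrt (by positivity), sq_sqrt (by positivity),
    show n + 1 + b = n + (b + 1) by ring, factorial_succ]
  push_cast
  field_simp

theorem fmn_apply (m : ℤ) (n : ℕ) (z : ℂ) :
    fmn m n z = fmnNormConst m.natAbs n *
      ((if 0 ≤ m then z ^ m.natAbs else conj z ^ m.natAbs) * laguerreFun m.natAbs n (z * conj z)) := by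
  have hz : z * conj z = ((‖z‖ ^ 2 : ℝ) : ℂ) := by
    rw [mul_conj']
    push_cast
    rfl
  rw [fmn, laguerreFun, hz, ← laguerre_natCast_eq_eval, fmnNormConst]
  push_cast
  ring

theorem fmn_natCast (a n : ℕ) :
    fmn a n = fun z => fmnNormConst a n * (z ^ a * laguerreFun a n (z * conj z)) := by
  ext z
  simp [fmn_apply]

theorem fmn_neg_natCast (b n : ℕ) :
    fmn (-b) n = fun z => fmnNormConst b n * (conj z ^ b * laguerreFun b n (z * conj z)) := by
  ext z
  rw [fmn_apply, Int.natAbs_neg, Int.natAbs_natCast]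
  split_ifs with hb
  · obtain rfl : b = 0 := by omega
    simp
  · rfl

theorem fmn_raising_identity (m : ℤ) (n : ℕ) (z : ℂ) :
    opDstar (fmn m n) z =
      2 * Complex.I * (if 0 ≤ m then (1 : ℂ) else -1) *
        (Real.sqrt ((n : ℝ) + ((max m 0 : ℤ) : ℝ) + 1) : ℂ) *
        fmn (m + 1) (n + if 0 < -m then 1 else 0) z := by
  rcases m with a | b
  · have hdiff : DifferentiableAt ℝ (fun w => w ^ a * laguerreFun a n (w * conj w)) z :=
      (differentiableAt_pow a).fun_mul (differentiableAt_laguerreFun_mul_conj a n)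
    rw [Int.ofNat_eq_natCast, if_pos (by positivity), if_neg (by omega), add_zero,
      max_eq_left (by positivity), ← Nat.cast_add_one, fmn_natCast, fmn_natCast,
      opDstar_const_mul _ hdiff, opDstar_pow_mul_laguerreFun, fmnNormConst_eq_sqrt_mul]
    push_cast
    ring
  · have hdiff : DifferentiableAt ℝ
        (fun w => conj w ^ (b + 1) * laguerreFun (b + 1) n (w * conj w)) z :=
      (differentiable_conj.differentiableAt.fun_pow _).fun_mul
        (differentiableAt_laguerreFun_mul_conj _ n)
    have hconst : (√(n + 1) * fmnNormConst b (n + 1) : ℂ) = (n + 1) * fmnNormConst (b + 1) n := by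
      exact_mod_cast sqrt_mul_fmnNormConst_succ_right b n
    rw [Int.negSucc_eq, if_neg (by omega), if_pos (by omega), max_eq_right (by omega),
      Int.cast_zero, add_zero, show -((b : ℤ) + 1) + 1 = -b by ring, ← Nat.cast_add_one,
      fmn_neg_natCast, fmn_neg_natCast, opDstar_const_mul _ hdiff,
      opDstar_conj_pow_mul_laguerreFun]
    push_cast
    linear_combination (2 * I * (conj z ^ b * laguerreFun b (n + 1) (z * conj z))) * hconst
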